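/- arXiv:2409.00002 — 4 statements merged into one kernel-verified Lean document; each statement's English description precedes it below -/
import Mathlib

section
/- Let C : ℝ^d → ℝ^d satisfy ‖C(x)/p − x‖² ≤ (1−φ)‖x‖² for all x, with p > 0 and φ ∈ (0,1]. Then every (locally absolutely continuous) solution of the ODE ẋ = −C(x) satisfies d/dt (‖x(t)‖²/p) ≤ −φ‖x(t)‖², and consequently ‖x(t)‖² ≤ ‖x(0)‖² e^{−pφ t} for all t ≥ 0. -/
/-! Along the flow `ẋ = -C(x)`, `d/dt ‖x‖² = -2⟪C(x), x⟫`. Expanding the contraction inequality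
`‖C(x)/p - x‖² ≤ (1 - φ)‖x‖²` and dropping the term `‖C(x)/p‖² ≥ 0` gives
`2⟪C(x), x⟫ ≥ pφ‖x‖²`, so `(‖x‖²)' ≤ -pφ‖x‖²`; multiplying by `e^{pφt}` turns this into a
nonincreasing function, which is the exponential decay. -/

open Real RealInnerProductSpace

theorem mul_mul_norm_sq_le_two_inner_of_contraction {E : Type*} [NormedAddCommGroup E]
    [InnerProductSpace ℝ E] {p φ : ℝ} (hp : 0 < p) {c v : E}
    (h : ‖p⁻¹ • c - v‖ ^ 2 ≤ (1 - φ) * ‖v‖ ^ 2) :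
    p * φ * ‖v‖ ^ 2 ≤ 2 * ⟪c, v⟫ := by
  rw [norm_sub_sq_real, real_inner_smul_left] at h
  have h' : φ * ‖v‖ ^ 2 ≤ p⁻¹ * (2 * ⟪c, v⟫) := by nlinarith [sq_nonneg ‖p⁻¹ • c‖]
  calc p * φ * ‖v‖ ^ 2 ≤ p * (p⁻¹ * (2 * ⟪c, v⟫)) := by
        rw [mul_assoc]; exact mul_le_mul_of_nonneg_left h' hp.le
    _ = 2 * ⟪c, v⟫ := by rw [← mul_assoc, mul_inv_cancel₀ hp.ne', one_mul]

theorem le_mul_exp_of_hasDerivAt_le_mul {f f' : ℝ → ℝ} {K : ℝ}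
    (hf : ∀ t, HasDerivAt f (f' t) t) (hf' : ∀ t, f' t ≤ K * f t) {t : ℝ} (ht : 0 ≤ t) :
    f t ≤ f 0 * exp (K * t) := by
  have hg : ∀ s, HasDerivAt (fun s => f s * exp (-K * s))
      (f' s * exp (-K * s) + f s * (-K * exp (-K * s))) s := fun s =>
    (hf s).mul (by simpa [mul_comm] using ((hasDerivAt_id s).const_mul (-K)).exp)
  have hanti : Antitone fun s => f s * exp (-K * s) :=
    antitone_of_hasDerivAt_nonpos hg fun s => by
      show f' s * exp (-K * s) + f s * (-K * exp (-K * s)) ≤ 0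
      nlinarith [hf' s, exp_pos (-K * s)]
  have hle : f t * exp (-K * t) ≤ f 0 := by simpa using hanti ht
  calc f t = f t * exp (-K * t) * exp (K * t) := by
        rw [mul_assoc, ← exp_add, neg_mul, neg_add_cancel, exp_zero, mul_one]
    _ ≤ f 0 * exp (K * t) := mul_le_mul_of_nonneg_right hle (exp_pos _).le

theorem stmt2_general (d : ℕ) (C : EuclideanSpace ℝ (Fin d) → EuclideanSpace ℝ (Fin d))
    (p φ : ℝ) (hp : 0 < p)
    (h : ∀ x, ‖p⁻¹ • C x - x‖ ^ 2 ≤ (1 - φ) * ‖x‖ ^ 2)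
    (x : ℝ → EuclideanSpace ℝ (Fin d))
    (hx : ∀ t : ℝ, HasDerivAt x (-(C (x t))) t) :
    (∀ t : ℝ, 0 ≤ t → deriv (fun s => ‖x s‖ ^ 2 / p) t ≤ -φ * ‖x t‖ ^ 2) ∧
      (∀ t : ℝ, 0 ≤ t → ‖x t‖ ^ 2 ≤ ‖x 0‖ ^ 2 * Real.exp (-(p * φ) * t)) := by
  have henergy : ∀ t, HasDerivAt (‖x ·‖ ^ 2) (2 * ⟪x t, -C (x t)⟫) t := fun t => (hx t).norm_sq
  have hdissip : ∀ t, 2 * ⟪x t, -C (x t)⟫ ≤ -(p * φ) * ‖x t‖ ^ 2 := fun t => by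
    have := mul_mul_norm_sq_le_two_inner_of_contraction hp (h (x t))
    rw [inner_neg_right, real_inner_comm]
    linarith
  refine ⟨fun t _ => ?_, fun t ht => le_mul_exp_of_hasDerivAt_le_mul henergy hdissip ht⟩
  rw [((henergy t).div_const p).deriv, div_le_iff₀ hp]
  linarith [hdissip t]

theorem stmt2 (d : ℕ) (C : EuclideanSpace ℝ (Fin d) → EuclideanSpace ℝ (Fin d))
    (p φ : ℝ) (hp : 0 < p) (hφ0 : 0 < φ) (hφ1 : φ ≤ 1)
    (h : ∀ x, ‖p⁻¹ • C x - x‖ ^ 2 ≤ (1 - φ) * ‖x‖ ^ 2)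
    (x : ℝ → EuclideanSpace ℝ (Fin d))
    (hx : ∀ t : ℝ, HasDerivAt x (-(C (x t))) t) :
    (∀ t : ℝ, 0 ≤ t → deriv (fun s => ‖x s‖ ^ 2 / p) t ≤ -φ * ‖x t‖ ^ 2) ∧
      (∀ t : ℝ, 0 ≤ t → ‖x t‖ ^ 2 ≤ ‖x 0‖ ^ 2 * Real.exp (-(p * φ) * t)) :=
  stmt2_general d C p φ hp h x hx
end

section
/- Let C_{2b}(x) = (‖x‖_∞ / 2)·sgn(x) be the standard uniform quantizer on ℝ^d, with the convention C_{2b}(0) = 0. Then ‖C_{2b}(x)/(d/2) − x‖² ≤ (1 − 1/d²)‖x‖² for all x ∈ ℝ^d. -/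
/-!
With `M = ‖x‖_∞` and `s = sgn x` we have `⟪s, x⟫ = ‖x‖₁` and `‖s‖² ≤ d`, so
`‖(M / d) • s - x‖² ≤ M² / d - 2 M ‖x‖₁ / d + ‖x‖² ≤ ‖x‖² - M ‖x‖₁ / d` because `M ≤ ‖x‖₁`.
As `‖x‖² ≤ M ‖x‖₁`, this is at most `(1 - 1 / d) ‖x‖² ≤ (1 - 1 / d²) ‖x‖²`.
-/

open Finset

namespace Real

theorem sign_mul_self (t : ℝ) : sign t * t = |t| := by
  rcases lt_trichotomy t 0 with h | rfl | h
  · rw [sign_of_neg h, abs_of_neg h]; ring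
  · simp
  · rw [sign_of_pos h, abs_of_pos h]; ring

theorem sign_sq_le_one (t : ℝ) : sign t ^ 2 ≤ 1 := by
  rcases sign_apply_eq t with h | h | h <;> norm_num [h]

end Real

section SupAbs

variable {ι : Type*} (s : Finset ι) (hs : s.Nonempty) (x : ι → ℝ)

theorem Finset.sup'_abs_le_sum_abs : s.sup' hs (fun j => |x j|) ≤ ∑ i ∈ s, |x i| :=
  sup'_le _ _ fun _ hj => single_le_sum (f := fun i => |x i|) (fun _ _ => abs_nonneg _) hj

theorem Finset.sum_sq_le_sup'_abs_mul_sum_abs :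
    ∑ i ∈ s, x i ^ 2 ≤ s.sup' hs (fun j => |x j|) * ∑ i ∈ s, |x i| := by
  rw [mul_sum]
  refine sum_le_sum fun i hi => ?_
  rw [← sq_abs, sq]
  exact mul_le_mul_of_nonneg_right (le_sup' (fun j => |x j|) hi) (abs_nonneg _)

end SupAbs

namespace EuclideanSpace

variable {ι : Type*} [Fintype ι]

noncomputable def signVec (x : EuclideanSpace ℝ ι) : EuclideanSpace ℝ ι :=
  WithLp.toLp 2 fun i => Real.sign (x i)

theorem inner_signVec_self (x : EuclideanSpace ℝ ι) :
    inner ℝ (signVec x) x = ∑ i, |x i| := by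
  simp [signVec, PiLp.inner_apply, mul_comm _ (Real.sign _), Real.sign_mul_self]

theorem norm_signVec_sq_le (x : EuclideanSpace ℝ ι) :
    ‖signVec x‖ ^ 2 ≤ Fintype.card ι := by
  rw [real_norm_sq_eq]
  simpa [signVec] using sum_le_sum fun i (_ : i ∈ univ) => Real.sign_sq_le_one (x i)

theorem norm_smul_signVec_sub_sq_le [Nonempty ι] (x : EuclideanSpace ℝ ι) :
    ‖(univ.sup' univ_nonempty (fun j => |x j|) / Fintype.card ι) • signVec x - x‖ ^ 2
      ≤ (1 - 1 / (Fintype.card ι : ℝ)) * ‖x‖ ^ 2 := by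
  have hMA := sup'_abs_le_sum_abs univ univ_nonempty x
  have hQM := sum_sq_le_sup'_abs_mul_sum_abs univ univ_nonempty x
  have hS := norm_signVec_sq_le x
  rw [norm_sub_sq_real, norm_smul, mul_pow, Real.norm_eq_abs, sq_abs, inner_smul_left,
    RCLike.conj_to_real, inner_signVec_self, real_norm_sq_eq x]
  set M := univ.sup' univ_nonempty (fun j => |x j|)
  set n : ℝ := (Fintype.card ι : ℝ)
  set A := ∑ i, |x i|
  set Q := ∑ i, x i ^ 2
  have hn : 0 < n := by simp [n, Fintype.card_pos]
  have hM : 0 ≤ M :=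
    (abs_nonneg _).trans (le_sup' (fun j => |x j|) (mem_univ (Classical.arbitrary ι)))
  have hsign : (M / n) ^ 2 * ‖signVec x‖ ^ 2 ≤ M * A / n := calc
    (M / n) ^ 2 * ‖signVec x‖ ^ 2 ≤ (M / n) ^ 2 * n := by gcongr
    _ = M * M / n := by field_simp
    _ ≤ M * A / n := by gcongr
  calc (M / n) ^ 2 * ‖signVec x‖ ^ 2 - 2 * (M / n * A) + Q
      ≤ Q - M * A / n := by rw [← mul_div_right_comm]; linarith
    _ ≤ Q - Q / n := by gcongr
    _ = (1 - 1 / n) * Q := by ring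

end EuclideanSpace

theorem stmt4 (d : ℕ) (hd : 0 < d) (x : EuclideanSpace ℝ (Fin d)) :
    haveI : Nonempty (Fin d) := ⟨⟨0, hd⟩⟩
    ‖((d : ℝ) / 2)⁻¹ •
        (WithLp.equiv 2 (Fin d → ℝ)).symm
          (fun i => Finset.univ.sup' Finset.univ_nonempty (fun j => |x j|) / 2 *
            Real.sign (x i)) - x‖ ^ 2
      ≤ (1 - 1 / (d : ℝ) ^ 2) * ‖x‖ ^ 2 := by
  have : Nonempty (Fin d) := ⟨⟨0, hd⟩⟩
  have hd1 : (1 : ℝ) ≤ d := by exact_mod_cast hd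
  have hquantizer : ((d : ℝ) / 2)⁻¹ • (WithLp.equiv 2 (Fin d → ℝ)).symm
      (fun i => univ.sup' univ_nonempty (fun j => |x j|) / 2 * Real.sign (x i))
      = (univ.sup' univ_nonempty (fun j => |x j|) / d) • EuclideanSpace.signVec x := by
    ext i
    simp only [EuclideanSpace.signVec, PiLp.smul_apply, WithLp.equiv_symm_apply, smul_eq_mul]
    field_simp
  calc _ ≤ (1 - 1 / (d : ℝ)) * ‖x‖ ^ 2 := by
        rw [hquantizer]
        simpa using EuclideanSpace.norm_smul_signVec_sub_sq_le x
    _ ≤ (1 - 1 / (d : ℝ) ^ 2) * ‖x‖ ^ 2 := by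
        gcongr
        exact le_self_pow₀ hd1 two_ne_zero
end

section
/- Consider the scaled flooring map C₃(x,t) = γ^t ⌊x/γ^t⌋ on ℝ^d (componentwise floor) with e^{−1} < γ < 1. Along any solution of ẋ = −C₃(x,t), the rescaled variable z(t) = x(t)/γ^t satisfies ż = −⌊z⌋ − ln(γ)·z, and the function V(z) = ‖z‖²/2 satisfies V̇ ≤ −(1 + ln γ)·V + d / (2(1 + ln γ)). -/
/-!
The formula for `ż` is the product rule for `γ^{-t} • x(t)`. For `V`, write `a = 1 + ln γ > 0`;
then `V̇ = ⟪z, -⌊z⌋ - ln γ • z⟫ = ∑ᵢ (zᵢ fract(zᵢ) - a zᵢ²)`, and AM-GM with `0 ≤ fract(zᵢ) < 1`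
gives `zᵢ fract(zᵢ) ≤ a zᵢ² / 2 + 1 / (2a)` in each coordinate.
-/

noncomputable def componentwiseFloor {ι : Type*} (z : EuclideanSpace ℝ ι) : EuclideanSpace ℝ ι :=
  (WithLp.equiv 2 (ι → ℝ)).symm fun i => (⌊z i⌋ : ℝ)

lemma mul_fract_le {a : ℝ} (ha : 0 < a) (v : ℝ) : v * Int.fract v ≤ a * v ^ 2 / 2 + 1 / (2 * a) := by
  have hr0 := Int.fract_nonneg v
  have hr1 := Int.fract_lt_one v
  have amgm : 2 * a * (v * Int.fract v) ≤ (a * v) ^ 2 + Int.fract v ^ 2 := by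
    nlinarith [sq_nonneg (a * v - Int.fract v)]
  rw [div_add_div _ _ two_ne_zero (by positivity), le_div_iff₀ (by positivity)]
  nlinarith

lemma mul_neg_floor_sub_le {c : ℝ} (hc : 0 < 1 + c) (v : ℝ) :
    v * (-⌊v⌋ - c * v) ≤ -(1 + c) * (v ^ 2 / 2) + 1 / (2 * (1 + c)) := by
  have := mul_fract_le hc v
  rw [Int.fract] at this
  linarith

lemma inner_neg_componentwiseFloor_sub_smul_le {ι : Type*} [Fintype ι] {c : ℝ} (hc : 0 < 1 + c)
    (z : EuclideanSpace ℝ ι) :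
    inner ℝ z (-componentwiseFloor z - c • z)
      ≤ -(1 + c) * (‖z‖ ^ 2 / 2) + Fintype.card ι / (2 * (1 + c)) := by
  have hsum : inner ℝ z (-componentwiseFloor z - c • z) = ∑ i, z i * (-⌊z i⌋ - c * z i) := by
    simp [PiLp.inner_apply, componentwiseFloor, mul_comm]
  have hbound : ∑ i, (-(1 + c) * (z i ^ 2 / 2) + 1 / (2 * (1 + c)))
      = -(1 + c) * (‖z‖ ^ 2 / 2) + Fintype.card ι / (2 * (1 + c)) := by
    rw [Finset.sum_add_distrib, ← Finset.mul_sum, ← Finset.sum_div,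
      EuclideanSpace.real_norm_sq_eq, Finset.sum_const, Finset.card_univ, nsmul_eq_mul,
      mul_one_div]
  rw [hsum, ← hbound]
  exact Finset.sum_le_sum fun i _ => mul_neg_floor_sub_le hc (z i)

lemma HasDerivAt.inv_rpow_smul {E : Type*} [NormedAddCommGroup E] [NormedSpace ℝ E] {γ : ℝ}
    (hγ : 0 < γ) {x : ℝ → E} {x' : E} {t : ℝ} (hx : HasDerivAt x x' t) :
    HasDerivAt (fun s => (γ ^ s)⁻¹ • x s) ((γ ^ t)⁻¹ • x' - Real.log γ • ((γ ^ t)⁻¹ • x t)) t := by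
  have hinv : HasDerivAt (fun s => (γ ^ s)⁻¹) (-(Real.log γ * (γ ^ t)⁻¹)) t := by
    have h := (hasDerivAt_neg t).const_rpow hγ
    simpa only [Real.rpow_neg hγ.le, mul_neg_one, neg_mul] using h
  refine (hinv.smul hx).congr_deriv ?_
  rw [smul_smul, neg_smul, sub_eq_neg_add, add_comm]

theorem stmt5_general (d : ℕ) (γ : ℝ) (hγ1 : Real.exp (-1) < γ)
    (x : ℝ → EuclideanSpace ℝ (Fin d))
    (hx : ∀ t : ℝ, HasDerivAt x
      (-((γ ^ t) • (WithLp.equiv 2 (Fin d → ℝ)).symm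
        (fun i => (⌊(γ ^ t)⁻¹ * x t i⌋ : ℝ)))) t) :
    (∀ t : ℝ, HasDerivAt (fun s => (γ ^ s)⁻¹ • x s)
        (-((WithLp.equiv 2 (Fin d → ℝ)).symm (fun i => (⌊(γ ^ t)⁻¹ * x t i⌋ : ℝ)))
          - Real.log γ • ((γ ^ t)⁻¹ • x t)) t) ∧
      (∀ t : ℝ, deriv (fun s => ‖(γ ^ s)⁻¹ • x s‖ ^ 2 / 2) t
          ≤ -(1 + Real.log γ) * (‖(γ ^ t)⁻¹ • x t‖ ^ 2 / 2)
            + d / (2 * (1 + Real.log γ))) := by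
  have hγ0 : 0 < γ := (Real.exp_pos _).trans hγ1
  have hlog : 0 < 1 + Real.log γ := by
    have := Real.log_lt_log (Real.exp_pos (-1)) hγ1
    rw [Real.log_exp] at this
    linarith
  have hz : ∀ t, HasDerivAt (fun s => (γ ^ s)⁻¹ • x s)
      (-componentwiseFloor ((γ ^ t)⁻¹ • x t) - Real.log γ • ((γ ^ t)⁻¹ • x t)) t := by
    intro t
    have h := (hx t).inv_rpow_smul hγ0
    rwa [smul_neg, smul_smul, inv_mul_cancel₀ (Real.rpow_pos_of_pos hγ0 t).ne', one_smul] at h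
  refine ⟨hz, fun t => ?_⟩
  rw [((hz t).norm_sq.div_const 2).deriv, mul_div_cancel_left₀ _ two_ne_zero]
  simpa using inner_neg_componentwiseFloor_sub_smul_le hlog ((γ ^ t)⁻¹ • x t)

theorem stmt5 (d : ℕ) (γ : ℝ) (hγ1 : Real.exp (-1) < γ) (hγ2 : γ < 1)
    (x : ℝ → EuclideanSpace ℝ (Fin d))
    (hx : ∀ t : ℝ, HasDerivAt x
      (-((γ ^ t) • (WithLp.equiv 2 (Fin d → ℝ)).symm
        (fun i => (⌊(γ ^ t)⁻¹ * x t i⌋ : ℝ)))) t) :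
    (∀ t : ℝ, HasDerivAt (fun s => (γ ^ s)⁻¹ • x s)
        (-((WithLp.equiv 2 (Fin d → ℝ)).symm (fun i => (⌊(γ ^ t)⁻¹ * x t i⌋ : ℝ)))
          - Real.log γ • ((γ ^ t)⁻¹ • x t)) t) ∧
      (∀ t : ℝ, deriv (fun s => ‖(γ ^ s)⁻¹ • x s‖ ^ 2 / 2) t
          ≤ -(1 + Real.log γ) * (‖(γ ^ t)⁻¹ • x t‖ ^ 2 / 2)
            + d / (2 * (1 + Real.log γ))) :=
  stmt5_general d γ hγ1 x hx
end

section
/- Let f(x) = Σᵢ fᵢ(x) be μ-strongly convex on ℝ^d and each ∇fᵢ be L_f-Lipschitz. With the notation of the orthogonal decomposition (x̄_∥ = 1_⊗ᵀ(x − s), x̄_⊥ = S_⊗ᵀ(x − s), s = 1_n ⊗ s*, ∇f(s*) = 0), the function V₃ = ‖x̄_∥‖²/2 satisfies along ẋ̄_∥ = −η 1_⊗ᵀ F̃(x̄): V̇₃ ≤ −(ημ/(2n))‖x̄_∥‖² + (ηn/(2μ))L_f²‖x̄_⊥‖², where F̃(x̄) = F(x̄+s) − F(s). -/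
/-!
Write `m = x̄_∥ / √n` for the average of the `x̄ᵢ`; then `V̇₃ = -η ⟪m, Σᵢ (∇fᵢ(x̄ᵢ + s*) - ∇fᵢ(s*))⟫`.
Split every summand at `m + s*`. Strong convexity of `f = Σ fᵢ` bounds the consensus part by
`-μ ‖m‖²`; the Lipschitz gradients bound the disagreement part by `L_f ‖m‖ Σᵢ ‖x̄ᵢ - m‖`, which
Young's inequality splits into `(μ/2) ‖m‖² + (n / 2μ) L_f² Σᵢ ‖x̄ᵢ - m‖²`. Finally
`Σᵢ ‖x̄ᵢ - m‖² = ‖x̄_⊥‖²` because `S Sᵀ` is the centering projection.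
-/

open Matrix Finset
open scoped RealInnerProductSpace

variable {E : Type*} [NormedAddCommGroup E] [InnerProductSpace ℝ E]

lemma sum_norm_sq_sum_smul_eq {m k : Type*} [Fintype m] [Fintype k] (S : Matrix m k ℝ)
    (x : m → E) :
    ∑ c, ‖∑ i, S i c • x i‖ ^ 2 = ∑ i, ∑ j, (S * Sᵀ) i j * ⟪x i, x j⟫ := by
  simp_rw [← real_inner_self_eq_norm_sq, sum_inner, inner_sum, real_inner_smul_left,
    real_inner_smul_right, mul_apply, transpose_apply, sum_mul]
  rw [sum_comm]
  refine sum_congr rfl fun i _ => ?_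
  rw [sum_comm]
  exact sum_congr rfl fun j _ => sum_congr rfl fun c _ => by ring

lemma sum_centering_mul_inner_eq {ι : Type*} [Fintype ι] [DecidableEq ι] (x : ι → E) :
    ∑ i, ∑ j,
        ((1 - (Fintype.card ι : ℝ)⁻¹ • of fun _ _ => (1 : ℝ) : Matrix ι ι ℝ)) i j
        * ⟪x i, x j⟫
      = ∑ i, ‖x i - (Fintype.card ι : ℝ)⁻¹ • ∑ j, x j‖ ^ 2 := by
  rcases isEmpty_or_nonempty ι with hι | hι
  · simp
  have hn : (Fintype.card ι : ℝ) ≠ 0 := Nat.cast_ne_zero.mpr Fintype.card_ne_zero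
  simp_rw [← real_inner_self_eq_norm_sq, inner_sub_left, inner_sub_right, real_inner_smul_left,
    real_inner_smul_right, Matrix.sub_apply, one_apply, Matrix.smul_apply, of_apply, smul_eq_mul,
    sub_mul, ite_mul, one_mul, zero_mul, mul_one, sum_sub_distrib, sum_ite_eq, mem_univ, if_true,
    ← mul_sum, sum_const, card_univ, nsmul_eq_mul]
  simp_rw [← inner_sum, ← sum_inner]
  field_simp
  ring

section StronglyMonotone

variable {ι : Type*} [Fintype ι] {g : ι → E → E} {μ L : ℝ}

lemma neg_inner_sum_sub_le_of_lipschitz (hL : ∀ i x y, ‖g i x - g i y‖ ≤ L * ‖x - y‖)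
    (m s : E) (x : ι → E) :
    -⟪m, ∑ i, (g i (x i + s) - g i (m + s))⟫ ≤ ∑ i, L * ‖x i - m‖ * ‖m‖ := by
  calc -⟪m, ∑ i, (g i (x i + s) - g i (m + s))⟫
      ≤ ‖m‖ * ‖∑ i, (g i (x i + s) - g i (m + s))‖ :=
        (neg_le_abs _).trans (abs_real_inner_le_norm _ _)
    _ ≤ ‖m‖ * ∑ i, L * ‖x i - m‖ := by
        gcongr
        refine (norm_sum_le _ _).trans (sum_le_sum fun i _ => ?_)
        simpa only [add_sub_add_right_eq_sub] using hL i (x i + s) (m + s)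
    _ = ∑ i, L * ‖x i - m‖ * ‖m‖ := by rw [mul_sum]; simp_rw [mul_comm ‖m‖]

lemma neg_inner_sum_sub_le_of_strongMono [Nonempty ι] (hμ : 0 < μ)
    (hL : ∀ i x y, ‖g i x - g i y‖ ≤ L * ‖x - y‖)
    (hsm : ∀ x y, μ * ‖x - y‖ ^ 2 ≤ ⟪x - y, ∑ i, (g i x - g i y)⟫) (m s : E) (x : ι → E) :
    -⟪m, ∑ i, (g i (x i + s) - g i s)⟫
      ≤ -(μ / 2) * ‖m‖ ^ 2 + Fintype.card ι / (2 * μ) * L ^ 2 * ∑ i, ‖x i - m‖ ^ 2 := by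
  set n : ℝ := (Fintype.card ι : ℝ)
  have hn : 0 < n := Nat.cast_pos.mpr Fintype.card_pos
  have hmono : μ * ‖m‖ ^ 2 ≤ ⟪m, ∑ i, (g i (m + s) - g i s)⟫ := by
    simpa only [add_sub_cancel_right] using hsm (m + s) s
  have hcross := neg_inner_sum_sub_le_of_lipschitz hL m s x
  -- Young's inequality with weight `μ / n`, one term per summand
  have hyoung : ∀ i, L * ‖x i - m‖ * ‖m‖
      ≤ μ / (2 * n) * ‖m‖ ^ 2 + n / (2 * μ) * L ^ 2 * ‖x i - m‖ ^ 2 := fun i => by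
    have := two_mul_le_add_mul_sq (a := ‖m‖) (b := L * ‖x i - m‖) (div_pos hμ hn)
    rw [inv_div] at this
    linarith [show μ / (2 * n) * ‖m‖ ^ 2 + n / (2 * μ) * L ^ 2 * ‖x i - m‖ ^ 2
      = (μ / n * ‖m‖ ^ 2 + n / μ * (L * ‖x i - m‖) ^ 2) / 2 by ring]
  have hsplit : ∑ i, (g i (x i + s) - g i s)
      = ∑ i, (g i (m + s) - g i s) + ∑ i, (g i (x i + s) - g i (m + s)) := by
    rw [← sum_add_distrib]
    exact sum_congr rfl fun i _ => by abel
  have hsum := hcross.trans (sum_le_sum fun i _ => hyoung i)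
  rw [sum_add_distrib, sum_const, card_univ, nsmul_eq_mul, ← mul_sum] at hsum
  rw [hsplit, inner_add_right]
  have hhalf : n * (μ / (2 * n) * ‖m‖ ^ 2) = μ / 2 * ‖m‖ ^ 2 := by field_simp
  linarith

end StronglyMonotone

lemma inner_inv_sqrt_smul_inv_sqrt_smul {r : ℝ} (hr : 0 ≤ r) (v w : E) :
    ⟪(√r)⁻¹ • v, (√r)⁻¹ • w⟫ = ⟪r⁻¹ • v, w⟫ := by
  rw [real_inner_smul_left, real_inner_smul_right, real_inner_smul_left, ← mul_assoc, ← mul_inv,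
    Real.mul_self_sqrt hr]

lemma norm_inv_sqrt_smul_sq {r : ℝ} (hr : 0 ≤ r) (v : E) :
    ‖(√r)⁻¹ • v‖ ^ 2 = r * ‖r⁻¹ • v‖ ^ 2 := by
  rw [norm_smul, norm_smul, mul_pow, mul_pow, norm_inv, norm_inv, Real.norm_of_nonneg hr,
    Real.norm_of_nonneg (Real.sqrt_nonneg r), inv_pow, Real.sq_sqrt hr, inv_pow, ← mul_assoc]
  rcases hr.eq_or_lt with rfl | hr
  · simp
  · field_simp

theorem stmt14_general (n d : ℕ) (hn : 0 < n)
    (f : Fin n → EuclideanSpace ℝ (Fin d) → ℝ) (μ Lf η : ℝ)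
    (hμ : 0 < μ) (hη : 0 < η)
    (hLip : ∀ i x y, ‖gradient (f i) x - gradient (f i) y‖ ≤ Lf * ‖x - y‖)
    (sstar : EuclideanSpace ℝ (Fin d))
    (hsc : ∀ x y : EuclideanSpace ℝ (Fin d),
      μ * ‖x - y‖ ^ 2
        ≤ (inner ℝ (x - y) (∑ i, (gradient (f i) x - gradient (f i) y)) : ℝ))
    (S : Matrix (Fin n) (Fin (n - 1)) ℝ)
    (hSST : S * Sᵀ = 1 - (n : ℝ)⁻¹ • Matrix.of fun _ _ => (1 : ℝ))
    (xbar : ℝ → Fin n → EuclideanSpace ℝ (Fin d))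
    (hpar : ∀ t : ℝ, HasDerivAt (fun s => (Real.sqrt n)⁻¹ • ∑ i, xbar s i)
      (-(η • ((Real.sqrt n)⁻¹ •
        ∑ i, (gradient (f i) (xbar t i + sstar) - gradient (f i) sstar)))) t) :
    ∀ t : ℝ, deriv (fun s => ‖(Real.sqrt n)⁻¹ • ∑ i, xbar s i‖ ^ 2 / 2) t
      ≤ -(η * μ / (2 * n)) * ‖(Real.sqrt n)⁻¹ • ∑ i, xbar t i‖ ^ 2
        + (η * n / (2 * μ)) * Lf ^ 2 * ∑ k, ‖∑ i, S i k • xbar t i‖ ^ 2 := by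
  intro t
  have hne : Nonempty (Fin n) := ⟨⟨0, hn⟩⟩
  have hn₀ : (0 : ℝ) < n := Nat.cast_pos.mpr hn
  have hcentering := sum_centering_mul_inner_eq (xbar t)
  rw [Fintype.card_fin] at hcentering
  rw [((hpar t).norm_sq.div_const 2).deriv, sum_norm_sq_sum_smul_eq, hSST, hcentering,
    inner_neg_right, real_inner_smul_right, inner_inv_sqrt_smul_inv_sqrt_smul hn₀.le,
    norm_inv_sqrt_smul_sq hn₀.le]
  set m := (n : ℝ)⁻¹ • ∑ i, xbar t i
  have key := neg_inner_sum_sub_le_of_strongMono hμ hLip hsc m sstar (xbar t)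
  rw [Fintype.card_fin] at key
  refine le_of_eq_of_le (by ring) ((mul_le_mul_of_nonneg_left key hη.le).trans_eq ?_)
  field_simp

theorem stmt14 (n d : ℕ) (hn : 0 < n)
    (f : Fin n → EuclideanSpace ℝ (Fin d) → ℝ) (μ Lf η : ℝ)
    (hμ : 0 < μ) (hLf : 0 ≤ Lf) (hη : 0 < η)
    (hLip : ∀ i x y, ‖gradient (f i) x - gradient (f i) y‖ ≤ Lf * ‖x - y‖)
    (sstar : EuclideanSpace ℝ (Fin d))
    (hsc : ∀ x y : EuclideanSpace ℝ (Fin d),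
      μ * ‖x - y‖ ^ 2
        ≤ (inner ℝ (x - y) (∑ i, (gradient (f i) x - gradient (f i) y)) : ℝ))
    (S : Matrix (Fin n) (Fin (n - 1)) ℝ)
    (hSS : Sᵀ * S = 1) (hS1 : Sᵀ.mulVec (fun _ => 1) = 0)
    (hSST : S * Sᵀ = 1 - (n : ℝ)⁻¹ • Matrix.of fun _ _ => (1 : ℝ))
    (xbar : ℝ → Fin n → EuclideanSpace ℝ (Fin d))
    (hpar : ∀ t : ℝ, HasDerivAt (fun s => (Real.sqrt n)⁻¹ • ∑ i, xbar s i)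
      (-(η • ((Real.sqrt n)⁻¹ •
        ∑ i, (gradient (f i) (xbar t i + sstar) - gradient (f i) sstar)))) t) :
    ∀ t : ℝ, deriv (fun s => ‖(Real.sqrt n)⁻¹ • ∑ i, xbar s i‖ ^ 2 / 2) t
      ≤ -(η * μ / (2 * n)) * ‖(Real.sqrt n)⁻¹ • ∑ i, xbar t i‖ ^ 2
        + (η * n / (2 * μ)) * Lf ^ 2 * ∑ k, ‖∑ i, S i k • xbar t i‖ ^ 2 :=
  stmt14_general n d hn f μ Lf η hμ hη hLip sstar hsc S hSST xbar hpar
end
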